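/- arXiv:1304.4492 — 4 statements merged into one kernel-verified Lean document; each statement's English description precedes it below -/
import Mathlib

section
/- Let A : ℝ³ × ℝ³ → M₃(ℝ) be the Pauli channel parametrization A(λ₁,λ₂,λ₃,φz,φy,φx) = R·diag(λ₁,λ₂,λ₃)·R⁻¹ with R = Rz(φz)Ry(φy)Rx(φx). Let D ⊂ ℝ⁶ be the set of tuples (λ₁,λ₂,λ₃,φz,φy,φx) such that: 1 + λ₃ ≥ |λ₁ + λ₂|; 1 − λ₃ ≥ |λ₁ − λ₂|; λ₁ ≥ λ₂ ≥ λ₃; φz, φy, φx ∈ [0, π); if φy = π/2 then φz = 0; if λ₁ = λ₂ = λ₃ then φz = φy = φx = 0; if λ₁ = λ₂ > λ₃ then φx = 0 and (φy = 0 implies φz = 0); if λ₁ > λ₂ = λ₃ then φx = 0. Then the restriction of the parametrization A to D is injective. -/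
open Matrix Real

/-- Rotation about the z-axis. -/
noncomputable def Rz (φ : ℝ) : Matrix (Fin 3) (Fin 3) ℝ :=
  !![cos φ, -sin φ, 0; sin φ, cos φ, 0; 0, 0, 1]

/-- Rotation about the y-axis. -/
noncomputable def Ry (φ : ℝ) : Matrix (Fin 3) (Fin 3) ℝ :=
  !![cos φ, 0, -sin φ; 0, 1, 0; sin φ, 0, cos φ]

/-- Rotation about the x-axis. -/
noncomputable def Rx (φ : ℝ) : Matrix (Fin 3) (Fin 3) ℝ :=
  !![1, 0, 0; 0, cos φ, -sin φ; 0, sin φ, cos φ]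

/-- The Pauli channel parametrization
`A(λ₁,λ₂,λ₃,φz,φy,φx) = R ⬝ diag(λ₁,λ₂,λ₃) ⬝ R⁻¹` with `R = Rz φz * Ry φy * Rx φx`. -/
noncomputable def pauliA : ℝ × ℝ × ℝ × ℝ × ℝ × ℝ → Matrix (Fin 3) (Fin 3) ℝ :=
  fun p =>
    (Rz p.2.2.2.1 * Ry p.2.2.2.2.1 * Rx p.2.2.2.2.2)
      * Matrix.diagonal ![p.1, p.2.1, p.2.2.1]
      * (Rz p.2.2.2.1 * Ry p.2.2.2.2.1 * Rx p.2.2.2.2.2)⁻¹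

/-- The domain `D` of Theorem 2. -/
noncomputable def domD : Set (ℝ × ℝ × ℝ × ℝ × ℝ × ℝ) :=
  {p | ∃ l₁ l₂ l₃ φz φy φx, p = (l₁, l₂, l₃, φz, φy, φx) ∧
    1 + l₃ ≥ |l₁ + l₂| ∧ 1 - l₃ ≥ |l₁ - l₂| ∧
    l₁ ≥ l₂ ∧ l₂ ≥ l₃ ∧
    φz ∈ Set.Ico 0 π ∧ φy ∈ Set.Ico 0 π ∧ φx ∈ Set.Ico 0 π ∧
    (φy = π / 2 → φz = 0) ∧
    (l₁ = l₂ ∧ l₂ = l₃ → φz = 0 ∧ φy = 0 ∧ φx = 0) ∧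
    (l₁ = l₂ ∧ l₂ > l₃ → φx = 0 ∧ (φy = 0 → φz = 0)) ∧
    (l₁ > l₂ ∧ l₂ = l₃ → φx = 0)}

/- ### Auxiliary lemmas -/

lemma mat3_eq {a₀₀ a₀₁ a₀₂ a₁₀ a₁₁ a₁₂ a₂₀ a₂₁ a₂₂ b₀₀ b₀₁ b₀₂ b₁₀ b₁₁ b₁₂ b₂₀ b₂₁ b₂₂ : ℝ}
    (h₀₀ : a₀₀ = b₀₀) (h₀₁ : a₀₁ = b₀₁) (h₀₂ : a₀₂ = b₀₂)
    (h₁₀ : a₁₀ = b₁₀) (h₁₁ : a₁₁ = b₁₁) (h₁₂ : a₁₂ = b₁₂)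
    (h₂₀ : a₂₀ = b₂₀) (h₂₁ : a₂₁ = b₂₁) (h₂₂ : a₂₂ = b₂₂) :
    !![a₀₀, a₀₁, a₀₂; a₁₀, a₁₁, a₁₂; a₂₀, a₂₁, a₂₂] =
    !![b₀₀, b₀₁, b₀₂; b₁₀, b₁₁, b₁₂; b₂₀, b₂₁, b₂₂] := by
  subst_vars; rfl

lemma mat3_inj {α : Type*} {a₀₀ a₀₁ a₀₂ a₁₀ a₁₁ a₁₂ a₂₀ a₂₁ a₂₂ b₀₀ b₀₁ b₀₂ b₁₀ b₁₁ b₁₂ b₂₀ b₂₁ b₂₂ : α}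
    (h : !![a₀₀, a₀₁, a₀₂; a₁₀, a₁₁, a₁₂; a₂₀, a₂₁, a₂₂] =
         !![b₀₀, b₀₁, b₀₂; b₁₀, b₁₁, b₁₂; b₂₀, b₂₁, b₂₂]) :
    a₀₀ = b₀₀ ∧ a₀₁ = b₀₁ ∧ a₀₂ = b₀₂ ∧ a₁₀ = b₁₀ ∧ a₁₁ = b₁₁ ∧ a₁₂ = b₁₂ ∧
    a₂₀ = b₂₀ ∧ a₂₁ = b₂₁ ∧ a₂₂ = b₂₂ := by
  have h' := Matrix.ext_iff.mpr h
  exact ⟨h' 0 0, h' 0 1, h' 0 2, h' 1 0, h' 1 1, h' 1 2, h' 2 0, h' 2 1, h' 2 2⟩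

lemma diag3 {α : Type*} [Zero α] (a b c : α) :
    Matrix.diagonal ![a, b, c] = !![a, 0, 0; 0, b, 0; 0, 0, c] := by
  ext i j; fin_cases i <;> fin_cases j <;> rfl

lemma transpose3 (a₀₀ a₀₁ a₀₂ a₁₀ a₁₁ a₁₂ a₂₀ a₂₁ a₂₂ : ℝ) :
    (!![a₀₀, a₀₁, a₀₂; a₁₀, a₁₁, a₁₂; a₂₀, a₂₁, a₂₂])ᵀ =
    !![a₀₀, a₁₀, a₂₀; a₀₁, a₁₁, a₂₁; a₀₂, a₁₂, a₂₂] := by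
  ext i j; fin_cases i <;> fin_cases j <;> rfl

lemma RM_eq (z y x : ℝ) : Rz z * Ry y * Rx x =
    !![cos z * cos y, -(cos z * sin y * sin x) - sin z * cos x, -(cos z * sin y * cos x) + sin z * sin x;
       sin z * cos y, -(sin z * sin y * sin x) + cos z * cos x, -(sin z * sin y * cos x) - cos z * sin x;
       sin y, cos y * sin x, cos y * cos x] := by
  rw [Rz, Ry, Rx, Matrix.mul_fin_three, Matrix.mul_fin_three]
  exact mat3_eq (by ring) (by ring) (by ring) (by ring) (by ring) (by ring) (by ring) (by ring)
    (by ring)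

lemma Rz_orth (z : ℝ) : Rz z * (Rz z)ᵀ = 1 := by
  rw [Rz, transpose3, Matrix.mul_fin_three, Matrix.one_fin_three]
  exact mat3_eq (by linear_combination sin_sq_add_cos_sq z) (by ring) (by ring)
    (by ring) (by linear_combination sin_sq_add_cos_sq z) (by ring)
    (by ring) (by ring) (by ring)

lemma Ry_orth (y : ℝ) : Ry y * (Ry y)ᵀ = 1 := by
  rw [Ry, transpose3, Matrix.mul_fin_three, Matrix.one_fin_three]
  exact mat3_eq (by linear_combination sin_sq_add_cos_sq y) (by ring) (by ring)
    (by ring) (by ring) (by ring)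
    (by ring) (by ring) (by linear_combination sin_sq_add_cos_sq y)

lemma Rx_orth (x : ℝ) : Rx x * (Rx x)ᵀ = 1 := by
  rw [Rx, transpose3, Matrix.mul_fin_three, Matrix.one_fin_three]
  exact mat3_eq (by ring) (by ring) (by ring)
    (by ring) (by linear_combination sin_sq_add_cos_sq x) (by ring)
    (by ring) (by ring) (by linear_combination sin_sq_add_cos_sq x)

lemma RM_orth (z y x : ℝ) : (Rz z * Ry y * Rx x) * (Rz z * Ry y * Rx x)ᵀ = 1 := by
  rw [Matrix.transpose_mul, Matrix.transpose_mul]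
  calc Rz z * Ry y * Rx x * ((Rx x)ᵀ * ((Ry y)ᵀ * (Rz z)ᵀ))
      = Rz z * (Ry y * ((Rx x * (Rx x)ᵀ) * ((Ry y)ᵀ * (Rz z)ᵀ))) := by
        simp only [mul_assoc]
    _ = Rz z * ((Ry y * (Ry y)ᵀ) * (Rz z)ᵀ) := by rw [Rx_orth, one_mul]; simp only [mul_assoc]
    _ = 1 := by rw [Ry_orth, one_mul, Rz_orth]

lemma ang_cos_inj {a b : ℝ} (ha : a ∈ Set.Ico 0 π) (hb : b ∈ Set.Ico 0 π)
    (h : Real.cos a = Real.cos b) : a = b :=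
  Real.injOn_cos ⟨ha.1, ha.2.le⟩ ⟨hb.1, hb.2.le⟩ h

lemma ang_sin_nonneg {a : ℝ} (ha : a ∈ Set.Ico 0 π) : 0 ≤ Real.sin a :=
  Real.sin_nonneg_of_nonneg_of_le_pi ha.1 ha.2.le

lemma ang_sin_eq_zero {a : ℝ} (ha : a ∈ Set.Ico 0 π) (h : Real.sin a = 0) : a = 0 := by
  rcases eq_or_lt_of_le ha.1 with h0 | h0
  · exact h0.symm
  · exact absurd h (ne_of_gt (Real.sin_pos_of_pos_of_lt_pi h0 ha.2))

lemma ang_cos_eq_zero {a : ℝ} (ha : a ∈ Set.Ico 0 π) (h : Real.cos a = 0) : a = π / 2 :=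
  ang_cos_inj ha ⟨by positivity, by linarith [Real.pi_pos]⟩ (by rw [h, Real.cos_pi_div_two])

lemma col1_lemma {z1 y1 z2 y2 s : ℝ}
    (hz1 : z1 ∈ Set.Ico 0 π) (hy1 : y1 ∈ Set.Ico 0 π)
    (hz2 : z2 ∈ Set.Ico 0 π) (hy2 : y2 ∈ Set.Ico 0 π)
    (hp1 : y1 = π / 2 → z1 = 0) (hp2 : y2 = π / 2 → z2 = 0)
    (hs : s = 1 ∨ s = -1)
    (h1 : cos z1 * cos y1 = s * (cos z2 * cos y2))
    (h2 : sin z1 * cos y1 = s * (sin z2 * cos y2))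
    (h3 : sin y1 = s * sin y2) : z1 = z2 ∧ y1 = y2 := by
  have nz1 := ang_sin_nonneg hz1
  have nz2 := ang_sin_nonneg hz2
  have ny1 := ang_sin_nonneg hy1
  have ny2 := ang_sin_nonneg hy2
  rcases hs with rfl | rfl
  · simp only [one_mul] at h1 h2 h3
    have hcy2sq : cos y1 ^ 2 = cos y2 ^ 2 := by
      nlinarith [sin_sq_add_cos_sq y1, sin_sq_add_cos_sq y2]
    by_cases hc0 : cos y1 = 0
    · have hc20 : cos y2 = 0 := by nlinarith
      have e1 : y1 = π / 2 := ang_cos_eq_zero hy1 hc0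
      have e2 : y2 = π / 2 := ang_cos_eq_zero hy2 hc20
      exact ⟨by rw [hp1 e1, hp2 e2], by rw [e1, e2]⟩
    · have hfac : (cos y1 - cos y2) * (cos y1 + cos y2) = 0 := by linear_combination hcy2sq
      rcases mul_eq_zero.mp hfac with h | h
      · have hcy : cos y1 = cos y2 := by linarith
        have hcz : cos z1 = cos z2 := mul_right_cancel₀ hc0 (by rw [h1, hcy])
        exact ⟨ang_cos_inj hz1 hz2 hcz, ang_cos_inj hy1 hy2 hcy⟩
      · have hcy : cos y1 = -cos y2 := by linarith
        have hsz : sin z1 = -sin z2 :=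
          mul_right_cancel₀ hc0 (by rw [h2, hcy]; ring)
        have hz10 : z1 = 0 := ang_sin_eq_zero hz1 (by linarith)
        have hz20 : z2 = 0 := ang_sin_eq_zero hz2 (by linarith)
        have hcz : cos z1 = -cos z2 := mul_right_cancel₀ hc0 (by rw [h1, hcy]; ring)
        rw [hz10, hz20, Real.cos_zero] at hcz
        linarith
  · have hy10 : sin y1 = 0 := by linarith
    have hy20 : sin y2 = 0 := by linarith
    have e1 : y1 = 0 := ang_sin_eq_zero hy1 hy10
    have e2 : y2 = 0 := ang_sin_eq_zero hy2 hy20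
    rw [e1, e2, Real.cos_zero, mul_one, mul_one] at h1 h2
    have hz10 : z1 = 0 := ang_sin_eq_zero hz1 (by linarith)
    have hz20 : z2 = 0 := ang_sin_eq_zero hz2 (by linarith)
    rw [hz10, hz20, Real.cos_zero] at h1
    linarith

lemma col3_lemma {z1 y1 z2 y2 s : ℝ}
    (hz1 : z1 ∈ Set.Ico 0 π) (hy1 : y1 ∈ Set.Ico 0 π)
    (hz2 : z2 ∈ Set.Ico 0 π) (hy2 : y2 ∈ Set.Ico 0 π)
    (hp1 : y1 = 0 → z1 = 0) (hp2 : y2 = 0 → z2 = 0)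
    (hs : s = 1 ∨ s = -1)
    (h1 : cos z1 * sin y1 = s * (cos z2 * sin y2))
    (h2 : sin z1 * sin y1 = s * (sin z2 * sin y2))
    (h3 : cos y1 = s * cos y2) : z1 = z2 ∧ y1 = y2 := by
  have nz1 := ang_sin_nonneg hz1
  have nz2 := ang_sin_nonneg hz2
  have ny1 := ang_sin_nonneg hy1
  have ny2 := ang_sin_nonneg hy2
  have hsy2sq : sin y1 ^ 2 = sin y2 ^ 2 := by
    rcases hs with rfl | rfl
    · simp only [one_mul] at h3
      linear_combination sin_sq_add_cos_sq y1 - sin_sq_add_cos_sq y2 - (cos y1 + cos y2) * h3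
    · linear_combination sin_sq_add_cos_sq y1 - sin_sq_add_cos_sq y2 - (cos y1 - cos y2) * h3
  have hsy : sin y1 = sin y2 := by nlinarith
  by_cases hs0 : sin y1 = 0
  · have hs20 : sin y2 = 0 := by linarith
    have e1 : y1 = 0 := ang_sin_eq_zero hy1 hs0
    have e2 : y2 = 0 := ang_sin_eq_zero hy2 hs20
    exact ⟨by rw [hp1 e1, hp2 e2], by rw [e1, e2]⟩
  · rcases hs with rfl | rfl
    · simp only [one_mul] at h1 h2 h3
      have hcz : cos z1 = cos z2 := mul_right_cancel₀ hs0 (by rw [h1, hsy])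
      exact ⟨ang_cos_inj hz1 hz2 hcz, ang_cos_inj hy1 hy2 h3⟩
    · have hsz : sin z1 = -sin z2 := mul_right_cancel₀ hs0 (by rw [h2, hsy]; ring)
      have hz10 : z1 = 0 := ang_sin_eq_zero hz1 (by linarith)
      have hz20 : z2 = 0 := ang_sin_eq_zero hz2 (by linarith)
      have hcz : cos z1 * sin y1 = -(cos z2 * sin y1) := by rw [h1, hsy]; ring
      rw [hz10, hz20, Real.cos_zero, one_mul] at hcz
      have : sin y1 = 0 := by linarith
      exact absurd this hs0

set_option maxHeartbeats 1000000 in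
/-- Theorem 2: the Pauli channel parametrization is injective
on the domain `D`. -/
theorem pauliA_injOn_domD : Set.InjOn pauliA domD := by
  rintro p hp q hq hA
  obtain ⟨l1, l2, l3, z1, y1, x1, rfl, -, -, hl12, hl23, hz1, hy1, hx1, hq1, hdA1, hdB1, hdC1⟩ := hp
  obtain ⟨m1, m2, m3, z2, y2, x2, rfl, -, -, hm12, hm23, hz2, hy2, hx2, hq2, hdA2, hdB2, hdC2⟩ := hq
  simp only [pauliA] at hA
  rw [Matrix.inv_eq_right_inv (RM_orth z1 y1 x1), Matrix.inv_eq_right_inv (RM_orth z2 y2 x2)] at hA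
  set M1 := Rz z1 * Ry y1 * Rx x1 with hM1def
  set M2 := Rz z2 * Ry y2 * Rx x2 with hM2def
  have hM1o : M1 * M1ᵀ = 1 := RM_orth z1 y1 x1
  have hM2o : M2 * M2ᵀ = 1 := RM_orth z2 y2 x2
  have hM2o' : M2ᵀ * M2 = 1 := mul_eq_one_comm.mp hM2o
  set S := M2ᵀ * M1 with hSdef
  have hST : Sᵀ = M1ᵀ * M2 := by rw [hSdef, Matrix.transpose_mul, Matrix.transpose_transpose]
  have hS1 : S * Sᵀ = 1 := by
    rw [hSdef, hST]
    calc M2ᵀ * M1 * (M1ᵀ * M2) = M2ᵀ * ((M1 * M1ᵀ) * M2) := by simp only [mul_assoc]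
      _ = 1 := by rw [hM1o, one_mul, hM2o']
  have hS2 : Sᵀ * S = 1 := mul_eq_one_comm.mp hS1
  have hSD : S * Matrix.diagonal ![l1, l2, l3] * Sᵀ = Matrix.diagonal ![m1, m2, m3] := by
    rw [hSdef, hST]
    calc M2ᵀ * M1 * Matrix.diagonal ![l1, l2, l3] * (M1ᵀ * M2)
        = M2ᵀ * (M1 * Matrix.diagonal ![l1, l2, l3] * M1ᵀ) * M2 := by simp only [mul_assoc]
      _ = M2ᵀ * (M2 * Matrix.diagonal ![m1, m2, m3] * M2ᵀ) * M2 := by rw [hA]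
      _ = (M2ᵀ * M2) * Matrix.diagonal ![m1, m2, m3] * (M2ᵀ * M2) := by simp only [mul_assoc]
      _ = _ := by rw [hM2o', one_mul, mul_one]
  have hSD' : Sᵀ * Matrix.diagonal ![m1, m2, m3] * S = Matrix.diagonal ![l1, l2, l3] := by
    calc Sᵀ * Matrix.diagonal ![m1, m2, m3] * S
        = Sᵀ * (S * Matrix.diagonal ![l1, l2, l3] * Sᵀ) * S := by rw [hSD]
      _ = (Sᵀ * S) * Matrix.diagonal ![l1, l2, l3] * (Sᵀ * S) := by simp only [mul_assoc]
      _ = _ := by rw [hS2, one_mul, mul_one]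
  have hRS : M1 = M2 * S := by rw [hSdef, ← mul_assoc, hM2o, one_mul]
  obtain ⟨s00, s01, s02, s10, s11, s12, s20, s21, s22, hS⟩ :
      ∃ a b c d e f g h i, S = !![a, b, c; d, e, f; g, h, i] :=
    ⟨_, _, _, _, _, _, _, _, _, Matrix.eta_fin_three S⟩
  have hS1c := hS1
  rw [hS, transpose3, Matrix.mul_fin_three, Matrix.one_fin_three] at hS1c
  obtain ⟨o00, o01, o02, o10, o11, o12, o20, o21, o22⟩ := mat3_inj hS1c
  have hS2c := hS2
  rw [hS, transpose3, Matrix.mul_fin_three, Matrix.one_fin_three] at hS2c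
  obtain ⟨c00, c01, c02, c10, c11, c12, c20, c21, c22⟩ := mat3_inj hS2c
  have hSDc := hSD
  rw [hS, transpose3, diag3, diag3, Matrix.mul_fin_three, Matrix.mul_fin_three] at hSDc
  obtain ⟨q00, q01, q02, q10, q11, q12, q20, q21, q22⟩ := mat3_inj hSDc
  have hSD'c := hSD'
  rw [hS, transpose3, diag3, diag3, Matrix.mul_fin_three, Matrix.mul_fin_three] at hSD'c
  obtain ⟨p00, p01, p02, p10, p11, p12, p20, p21, p22⟩ := mat3_inj hSD'c
  -- the eigenvalues coincide
  have key1 : l1 - m1 = s01 * s01 * (l1 - l2) + s02 * s02 * (l1 - l3) := by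
    linear_combination q00 - l1 * o00
  have key1' : m1 - l1 = s10 * s10 * (m1 - m2) + s20 * s20 * (m1 - m3) := by
    linear_combination p00 - m1 * c00
  have key3 : m3 - l3 = s20 * s20 * (l1 - l3) + s21 * s21 * (l2 - l3) := by
    linear_combination l3 * o22 - q22
  have key3' : l3 - m3 = s02 * s02 * (m1 - m3) + s12 * s12 * (m2 - m3) := by
    linear_combination m3 * c22 - p22
  have keyt : l1 + l2 + l3 = m1 + m2 + m3 := by
    linear_combination q00 + q11 + q22 - l1 * c00 - l2 * c11 - l3 * c22
  have A1 : 0 ≤ s01 * s01 * (l1 - l2) := mul_nonneg (mul_self_nonneg _) (by linarith)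
  have A2 : 0 ≤ s02 * s02 * (l1 - l3) := mul_nonneg (mul_self_nonneg _) (by linarith)
  have A3 : 0 ≤ s20 * s20 * (l1 - l3) := mul_nonneg (mul_self_nonneg _) (by linarith)
  have A4 : 0 ≤ s21 * s21 * (l2 - l3) := mul_nonneg (mul_self_nonneg _) (by linarith)
  have B1 : 0 ≤ s10 * s10 * (m1 - m2) := mul_nonneg (mul_self_nonneg _) (by linarith)
  have B2 : 0 ≤ s20 * s20 * (m1 - m3) := mul_nonneg (mul_self_nonneg _) (by linarith)
  have B3 : 0 ≤ s02 * s02 * (m1 - m3) := mul_nonneg (mul_self_nonneg _) (by linarith)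
  have B4 : 0 ≤ s12 * s12 * (m2 - m3) := mul_nonneg (mul_self_nonneg _) (by linarith)
  have em1 : l1 = m1 := by linarith
  have em3 : l3 = m3 := by linarith
  have em2 : l2 = m2 := by linarith
  subst em1; subst em2; subst em3
  -- commutation relation
  have hcomm : S * Matrix.diagonal ![l1, l2, l3] = Matrix.diagonal ![l1, l2, l3] * S := by
    calc S * Matrix.diagonal ![l1, l2, l3]
        = S * Matrix.diagonal ![l1, l2, l3] * (Sᵀ * S) := by rw [hS2, mul_one]
      _ = (S * Matrix.diagonal ![l1, l2, l3] * Sᵀ) * S := by simp only [mul_assoc]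
      _ = Matrix.diagonal ![l1, l2, l3] * S := by rw [hSD]
  rw [hS, diag3, Matrix.mul_fin_three, Matrix.mul_fin_three] at hcomm
  obtain ⟨g00, g01, g02, g10, g11, g12, g20, g21, g22⟩ := mat3_inj hcomm
  -- column relations
  have hRSc := hRS
  rw [hM1def, hM2def, RM_eq, RM_eq, hS, Matrix.mul_fin_three] at hRSc
  obtain ⟨r00, r01, r02, r10, r11, r12, r20, r21, r22⟩ := mat3_inj hRSc
  clear hA hSD hSD' hSDc hSD'c hS1c hS2c hRS hcomm hS1 hS2 hST hM1o hM2o hM2o' hS hSdef hRSc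
  clear S hM1def hM2def
  clear M1 M2
  rcases eq_or_lt_of_le hl23.le with h23 | h23
  · rcases eq_or_lt_of_le hl12.le with h12 | h12
    · -- l1 = l2 = l3
      obtain ⟨hz10, hy10, hx10⟩ := hdA1 ⟨h12.symm, h23.symm⟩
      obtain ⟨hz20, hy20, hx20⟩ := hdA2 ⟨h12.symm, h23.symm⟩
      rw [hz10, hy10, hx10, hz20, hy20, hx20]
    · -- l3 = l2 < l1
      obtain hx10 := hdC1 ⟨h12, h23.symm⟩
      obtain hx20 := hdC2 ⟨h12, h23.symm⟩
      have hs01 : s01 = 0 := by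
        rcases mul_eq_zero.mp (show s01 * (l2 - l1) = 0 by linear_combination g01) with h | h
        · exact h
        · linarith
      have hs02 : s02 = 0 := by
        rcases mul_eq_zero.mp (show s02 * (l3 - l1) = 0 by linear_combination g02) with h | h
        · exact h
        · linarith
      have hs10 : s10 = 0 := by
        rcases mul_eq_zero.mp (show s10 * (l1 - l2) = 0 by linear_combination g10) with h | h
        · exact h
        · linarith
      have hs20 : s20 = 0 := by
        rcases mul_eq_zero.mp (show s20 * (l1 - l3) = 0 by linear_combination g20) with h | h
        · exact h
        · linarith
      subst hs01; subst hs02; subst hs10; subst hs20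
      have hs00 : s00 * s00 = 1 := by linarith [c00]
      have e1 : cos z1 * cos y1 = s00 * (cos z2 * cos y2) := by linear_combination r00
      have e2 : sin z1 * cos y1 = s00 * (sin z2 * cos y2) := by linear_combination r10
      have e3 : sin y1 = s00 * sin y2 := by linear_combination r20
      obtain ⟨ez, ey⟩ :=
        col1_lemma hz1 hy1 hz2 hy2 hq1 hq2 (mul_self_eq_one_iff.mp hs00) e1 e2 e3
      rw [ez, ey, hx10, hx20]
  · rcases eq_or_lt_of_le hl12.le with h12 | h12
    · -- l3 < l2 = l1
      obtain ⟨hx10, hyz1⟩ := hdB1 ⟨h12.symm, h23⟩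
      obtain ⟨hx20, hyz2⟩ := hdB2 ⟨h12.symm, h23⟩
      have hs02 : s02 = 0 := by
        rcases mul_eq_zero.mp (show s02 * (l3 - l1) = 0 by linear_combination g02) with h | h
        · exact h
        · linarith
      have hs12 : s12 = 0 := by
        rcases mul_eq_zero.mp (show s12 * (l3 - l2) = 0 by linear_combination g12) with h | h
        · exact h
        · linarith
      subst hs02; subst hs12; subst hx10; subst hx20
      have hs22 : s22 * s22 = 1 := by linarith [c22]
      simp only [Real.sin_zero, Real.cos_zero] at r02 r12 r22
      have e1 : cos z1 * sin y1 = s22 * (cos z2 * sin y2) := by linear_combination -r02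
      have e2 : sin z1 * sin y1 = s22 * (sin z2 * sin y2) := by linear_combination -r12
      have e3 : cos y1 = s22 * cos y2 := by linear_combination r22
      obtain ⟨ez, ey⟩ :=
        col3_lemma hz1 hy1 hz2 hy2 hyz1 hyz2 (mul_self_eq_one_iff.mp hs22) e1 e2 e3
      rw [ez, ey]
    · -- l3 < l2 < l1
      have hs01 : s01 = 0 := by
        rcases mul_eq_zero.mp (show s01 * (l2 - l1) = 0 by linear_combination g01) with h | h
        · exact h
        · linarith
      have hs02 : s02 = 0 := by
        rcases mul_eq_zero.mp (show s02 * (l3 - l1) = 0 by linear_combination g02) with h | h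
        · exact h
        · linarith
      have hs10 : s10 = 0 := by
        rcases mul_eq_zero.mp (show s10 * (l1 - l2) = 0 by linear_combination g10) with h | h
        · exact h
        · linarith
      have hs12 : s12 = 0 := by
        rcases mul_eq_zero.mp (show s12 * (l3 - l2) = 0 by linear_combination g12) with h | h
        · exact h
        · linarith
      have hs20 : s20 = 0 := by
        rcases mul_eq_zero.mp (show s20 * (l1 - l3) = 0 by linear_combination g20) with h | h
        · exact h
        · linarith
      have hs21 : s21 = 0 := by
        rcases mul_eq_zero.mp (show s21 * (l2 - l3) = 0 by linear_combination g21) with h | h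
        · exact h
        · linarith
      subst hs01; subst hs02; subst hs10; subst hs12; subst hs20; subst hs21
      have hs00 : s00 * s00 = 1 := by linarith [o00]
      have hs11 : s11 * s11 = 1 := by linarith [o11]
      have hs22 : s22 * s22 = 1 := by linarith [o22]
      have e1 : cos z1 * cos y1 = s00 * (cos z2 * cos y2) := by linear_combination r00
      have e2 : sin z1 * cos y1 = s00 * (sin z2 * cos y2) := by linear_combination r10
      have e3 : sin y1 = s00 * sin y2 := by linear_combination r20
      obtain ⟨ez, ey⟩ :=
        col1_lemma hz1 hy1 hz2 hy2 hq1 hq2 (mul_self_eq_one_iff.mp hs00) e1 e2 e3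
      subst ez; subst ey
      have ex : x1 = x2 := by
        by_cases hcy : cos y1 = 0
        · have hy1' : y1 = π / 2 := ang_cos_eq_zero hy1 hcy
          have hz1' : z1 = 0 := hq1 hy1'
          subst hy1'; subst hz1'
          simp only [Real.sin_pi_div_two, Real.cos_pi_div_two, Real.sin_zero,
            Real.cos_zero] at r01 r11
          have f1 : sin x1 = s11 * sin x2 := by linear_combination -r01
          have f2 : cos x1 = s11 * cos x2 := by linear_combination r11
          rcases mul_self_eq_one_iff.mp hs11 with h | h
          · subst h
            exact ang_cos_inj hx1 hx2 (by linarith)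
          · subst h
            have n1 := ang_sin_nonneg hx1
            have n2 := ang_sin_nonneg hx2
            have hx10 : x1 = 0 := ang_sin_eq_zero hx1 (by linarith)
            have hx20 : x2 = 0 := ang_sin_eq_zero hx2 (by linarith)
            rw [hx10, hx20]
        · have f1 : sin x1 = s11 * sin x2 :=
            mul_left_cancel₀ hcy (by linear_combination r21)
          have f2 : cos x1 = s22 * cos x2 :=
            mul_left_cancel₀ hcy (by linear_combination r22)
          rcases mul_self_eq_one_iff.mp hs11 with h11 | h11
          · subst h11
            rcases mul_self_eq_one_iff.mp hs22 with h22 | h22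
            · subst h22
              exact ang_cos_inj hx1 hx2 (by linarith)
            · subst h22
              have ha : sin z1 * sin x1 = 0 := by
                linear_combination (1/2 : ℝ) * r02 + (1/2 : ℝ) * (cos z1 * sin y1) * f2 +
                  (1/2 : ℝ) * sin z1 * f1
              have hb : cos z1 * sin x1 = 0 := by
                linear_combination (-1/2 : ℝ) * r12 - (1/2 : ℝ) * (sin z1 * sin y1) * f2 +
                  (1/2 : ℝ) * cos z1 * f1
              have hsx1 : sin x1 = 0 := by
                linear_combination sin z1 * ha + cos z1 * hb - sin x1 * sin_sq_add_cos_sq z1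
              have hsx2 : sin x2 = 0 := by linarith [f1, hsx1]
              rw [ang_sin_eq_zero hx1 hsx1, ang_sin_eq_zero hx2 hsx2]
          · subst h11
            have n1 := ang_sin_nonneg hx1
            have n2 := ang_sin_nonneg hx2
            have hx10 : x1 = 0 := ang_sin_eq_zero hx1 (by linarith)
            have hx20 : x2 = 0 := ang_sin_eq_zero hx2 (by linarith)
            rw [hx10, hx20]
      rw [ex]
end

section
/- Let N be a positive integer, let M and Θ be real orthogonal 3×3 matrices, let λ₁, λ₂, λ₃ ∈ [−1,1], and let A = diag(λ₁, λ₂, λ₃). Set X = Mᵀ·A·Θ (so all entries of X lie in [−1,1]). Let (x̂_{ij})_{i,j∈{1,2,3}} be independent real random variables with E[x̂_{ij}] = X_{ij} and Var(x̂_{ij}) = (1 − X_{ij}²)/N, and define the random matrix Â = M·X̂·Θᵀ and its symmetrization Â_s = (Â + Âᵀ)/2. Then the mean squared Frobenius error satisfies E[‖Â_s − A‖²] ≥ (1/N)·(6 − (λ₁² + λ₂² + λ₃²)), where ‖B‖² = Σ_{i,j} B_{ij}² is the squared Hilbert–Schmidt norm. (Theorem 3, lower bound.) -/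
/-! The symmetrized estimator `Â_s = L X̂` is linear in the independent entries `x̂ₚ`, where
`L Y = (M Y Θᵀ + (M Y Θᵀ)ᵀ) / 2` and `L X = A`, so its mean squared error is
`∑ₚ ‖L Eₚ‖² Var x̂ₚ` with `Eₚ` the matrix units. For `p = (k, l)`, `L Eₚ` is the symmetrization
of `u vᵀ` with unit vectors `u = M eₖ`, `v = Θ eₗ`, so `‖L Eₚ‖² = (1 + Cₚ²) / 2` where
`C = MᵀΘ` is orthogonal. As `Cₚ² ≤ 1`, `∑ₚ Cₚ² = 3` and `∑ₚ Xₚ² = ∑ λᵢ²` by orthogonal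
invariance, the error is at least `(1/N) ∑ₚ ((1 + Cₚ²) / 2 - Xₚ²) = (6 - ∑ λᵢ²) / N`. -/

open MeasureTheory ProbabilityTheory Matrix
open Finset

lemma LinearMap.apply_matrix_eq_sum_mul_single {R m n m' n' : Type*} [CommSemiring R]
    [Fintype m] [Fintype n] [DecidableEq m] [DecidableEq n]
    (L : Matrix m n R →ₗ[R] Matrix m' n' R) (Y : Matrix m n R) (i : m') (j : n') :
    L Y i j = ∑ p : m × n, L (Matrix.single p.1 p.2 1) i j * Y p.1 p.2 := by
  conv_lhs => rw [matrix_eq_sum_single Y]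
  simp only [map_sum, Matrix.sum_apply, Fintype.sum_prod_type]
  refine sum_congr rfl fun a _ => sum_congr rfl fun b _ => ?_
  rw [show Matrix.single a b (Y a b) = Y a b • Matrix.single a b 1 by simp, map_smul,
    Matrix.smul_apply, smul_eq_mul, mul_comm]

section LinearEstimator

variable {Ω : Type*} [MeasurableSpace Ω] {μ : Measure Ω}

lemma variance_sum_mul_of_iIndepFun {ι : Type*} [Fintype ι] {Y : ι → Ω → ℝ}
    (hY : ∀ i, MemLp (Y i) 2 μ) (hindep : iIndepFun Y μ) (w : ι → ℝ) :
    variance (fun ω => ∑ i, w i * Y i ω) μ = ∑ i, w i ^ 2 * variance (Y i) μ := by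
  have hpair : Set.Pairwise (univ : Finset ι)
      fun i j => IndepFun (fun ω => w i * Y i ω) (fun ω => w j * Y j ω) μ :=
    fun i _ j _ hij => (hindep.indepFun hij).comp (measurable_const_mul _) (measurable_const_mul _)
  have hsum := IndepFun.variance_sum (fun i _ => (hY i).const_mul (w i)) hpair
  rw [Finset.sum_fn] at hsum
  rw [hsum]
  exact sum_congr rfl fun i _ => variance_const_mul _ _ _

variable [IsFiniteMeasure μ]

lemma integral_sq_sum_mul_sub_eq_sum_variance {ι : Type*} [Fintype ι] {Y : ι → Ω → ℝ}
    (hY : ∀ i, MemLp (Y i) 2 μ) (hindep : iIndepFun Y μ) (w : ι → ℝ) :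
    ∫ ω, (∑ i, w i * Y i ω - ∑ i, w i * μ[Y i]) ^ 2 ∂μ = ∑ i, w i ^ 2 * variance (Y i) μ := by
  have hS : MemLp (fun ω => ∑ i, w i * Y i ω) 2 μ :=
    memLp_finsetSum _ fun i _ => (hY i).const_mul _
  have hmean : μ[fun ω => ∑ i, w i * Y i ω] = ∑ i, w i * μ[Y i] := by
    rw [integral_finsetSum _ fun i _ => ((hY i).integrable one_le_two).const_mul _]
    exact sum_congr rfl fun i _ => integral_const_mul _ _
  rw [← hmean, ← variance_eq_integral hS.aemeasurable, variance_sum_mul_of_iIndepFun hY hindep]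

lemma integrable_sq_sum_mul_sub {ι : Type*} [Fintype ι] {Y : ι → Ω → ℝ}
    (hY : ∀ i, MemLp (Y i) 2 μ) (w : ι → ℝ) (c : ℝ) :
    Integrable (fun ω => (∑ i, w i * Y i ω - c) ^ 2) μ :=
  ((memLp_finsetSum _ fun i _ => (hY i).const_mul (w i)).sub (memLp_const c)).integrable_sq

theorem integral_sum_sq_linearMap_sub_eq_sum_variance {m n m' n' : Type*}
    [Fintype m] [Fintype n] [DecidableEq m] [DecidableEq n] [Fintype m'] [Fintype n']
    (L : Matrix m n ℝ →ₗ[ℝ] Matrix m' n' ℝ) {Y : m → n → Ω → ℝ}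
    (hY : ∀ a b, MemLp (Y a b) 2 μ) (hindep : iIndepFun (fun p : m × n => Y p.1 p.2) μ) :
    ∫ ω, ∑ i, ∑ j, (L (of fun a b => Y a b ω) i j - L (of fun a b => μ[Y a b]) i j) ^ 2 ∂μ
      = ∑ a, ∑ b, (∑ i, ∑ j, L (Matrix.single a b 1) i j ^ 2) * variance (Y a b) μ := by
  have hY' : ∀ p : m × n, MemLp (Y p.1 p.2) 2 μ := fun p => hY p.1 p.2
  have herr : ∀ ω i j, L (of fun a b => Y a b ω) i j - L (of fun a b => μ[Y a b]) i j
      = ∑ p : m × n, L (Matrix.single p.1 p.2 1) i j * Y p.1 p.2 ω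
        - ∑ p : m × n, L (Matrix.single p.1 p.2 1) i j * μ[Y p.1 p.2] := fun ω i j => by
    rw [L.apply_matrix_eq_sum_mul_single (of _), L.apply_matrix_eq_sum_mul_single (of _)]
    simp only [of_apply]
  simp_rw [herr]
  rw [integral_finsetSum _ fun i _ => integrable_finsetSum _ fun j _ =>
    integrable_sq_sum_mul_sub hY' _ _]
  simp_rw [integral_finsetSum _ fun j _ => integrable_sq_sum_mul_sub hY' _ _,
    integral_sq_sum_mul_sub_eq_sum_variance hY' hindep]
  rw [← Fintype.sum_prod_type'
    (f := fun a b => (∑ i, ∑ j, L (Matrix.single a b 1) i j ^ 2) * variance (Y a b) μ)]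
  simp only [sum_mul]
  symm
  rw [sum_comm]
  exact sum_congr rfl fun i _ => sum_comm

end LinearEstimator

section OrthogonalColumns

variable {m n : Type*} [Fintype m]

lemma sum_sum_add_mul_swap_sq (a b : m → ℝ) :
    ∑ i, ∑ j, (a i * b j + a j * b i) ^ 2
      = 2 * ((∑ i, a i ^ 2) * (∑ i, b i ^ 2) + (∑ i, a i * b i) ^ 2) := by
  calc ∑ i, ∑ j, (a i * b j + a j * b i) ^ 2
      = ∑ i, ∑ j, (a i ^ 2 * b j ^ 2 + 2 * ((a i * b i) * (a j * b j)) + b i ^ 2 * a j ^ 2) :=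
        sum_congr rfl fun i _ => sum_congr rfl fun j _ => by ring
    _ = _ := by simp only [sum_add_distrib, ← mul_sum, ← sum_mul]; ring

lemma sum_sq_apply_eq_one_of_transpose_mul_self [DecidableEq n] {C : Matrix m n ℝ}
    (hC : Cᵀ * C = 1) (j : n) : ∑ i, C i j ^ 2 = 1 := by
  simpa [mul_apply, sq] using congr_fun (congr_fun hC j) j

lemma sq_apply_le_one_of_transpose_mul_self [DecidableEq n] {C : Matrix m n ℝ}
    (hC : Cᵀ * C = 1) (i : m) (j : n) : C i j ^ 2 ≤ 1 :=
  (single_le_sum (f := fun i => C i j ^ 2) (fun _ _ => sq_nonneg _) (mem_univ i)).trans_eq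
    (sum_sq_apply_eq_one_of_transpose_mul_self hC j)

lemma sum_sum_sq_eq_trace_mul_transpose [Fintype n] (A : Matrix m n ℝ) :
    ∑ i, ∑ j, A i j ^ 2 = trace (A * Aᵀ) := by
  simp [trace, mul_apply, sq]

lemma sum_sum_sq_transpose_mul_mul [Fintype n] [DecidableEq m] [DecidableEq n]
    {M : Matrix m m ℝ} {Θ : Matrix n n ℝ} (hM : Mᵀ * M = 1) (hΘ : Θᵀ * Θ = 1) (A : Matrix m n ℝ) :
    ∑ i, ∑ j, (Mᵀ * A * Θ) i j ^ 2 = ∑ i, ∑ j, A i j ^ 2 := by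
  rw [sum_sum_sq_eq_trace_mul_transpose, sum_sum_sq_eq_trace_mul_transpose]
  calc trace (Mᵀ * A * Θ * (Mᵀ * A * Θ)ᵀ) = trace (Mᵀ * (A * (Θ * Θᵀ) * Aᵀ * M)) := by
        simp only [transpose_mul, transpose_transpose, Matrix.mul_assoc]
    _ = trace (A * Aᵀ * (M * Mᵀ)) := by
        rw [trace_mul_comm, mul_eq_one_comm.mp hΘ]; simp only [Matrix.mul_assoc, Matrix.mul_one]
    _ = trace (A * Aᵀ) := by rw [mul_eq_one_comm.mp hM, Matrix.mul_one]

lemma card_mul_add_card_div_two_sub_le [Fintype n] [DecidableEq n] {C : Matrix m n ℝ}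
    (hC : Cᵀ * C = 1) (X : Matrix m n ℝ) :
    ((Fintype.card m * Fintype.card n + Fintype.card n) / 2 : ℝ) - ∑ i, ∑ j, X i j ^ 2
      ≤ ∑ i, ∑ j, (1 + C i j ^ 2) / 2 * (1 - X i j ^ 2) := by
  have hCsum : ∑ i, ∑ j, C i j ^ 2 = Fintype.card n := by
    rw [sum_comm]; simp [sum_sq_apply_eq_one_of_transpose_mul_self hC]
  calc ((Fintype.card m * Fintype.card n + Fintype.card n) / 2 : ℝ) - ∑ i, ∑ j, X i j ^ 2
      = ∑ i, ∑ j, ((1 + C i j ^ 2) / 2 - X i j ^ 2) := by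
        simp only [sum_sub_distrib, ← sum_div, sum_add_distrib, hCsum]; simp
    _ ≤ _ := sum_le_sum fun i _ => sum_le_sum fun j _ => by
        nlinarith [sq_apply_le_one_of_transpose_mul_self hC i j, sq_nonneg (X i j)]

end OrthogonalColumns

section SymmetrizedConj

variable {l m n : Type*} [Fintype m] [Fintype n]

noncomputable def symmetrizedConj (M : Matrix l m ℝ) (Θ : Matrix l n ℝ) :
    Matrix m n ℝ →ₗ[ℝ] Matrix l l ℝ where
  toFun Y := (1 / 2 : ℝ) • (M * Y * Θᵀ + (M * Y * Θᵀ)ᵀ)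
  map_add' Y Z := by simp only [Matrix.mul_add, Matrix.add_mul, transpose_add]; module
  map_smul' c Y := by
    simp only [Matrix.mul_smul, Matrix.smul_mul, transpose_smul, RingHom.id_apply]; module

lemma symmetrizedConj_apply (M : Matrix l m ℝ) (Θ : Matrix l n ℝ) (Y : Matrix m n ℝ) :
    symmetrizedConj M Θ Y = (1 / 2 : ℝ) • (M * Y * Θᵀ + (M * Y * Θᵀ)ᵀ) := rfl

lemma sum_sum_sq_symmetrizedConj_single [Fintype l] [DecidableEq m] [DecidableEq n]
    (M : Matrix l m ℝ) (Θ : Matrix l n ℝ) (k : m) (k' : n) :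
    ∑ i, ∑ j, symmetrizedConj M Θ (Matrix.single k k' 1) i j ^ 2
      = ((∑ a, M a k ^ 2) * (∑ a, Θ a k' ^ 2) + (Mᵀ * Θ) k k' ^ 2) / 2 := by
  have hentry : ∀ i j, symmetrizedConj M Θ (Matrix.single k k' 1) i j
      = (M i k * Θ j k' + M j k * Θ i k') / 2 := fun i j => by
    simp only [symmetrizedConj_apply, one_div, transpose_mul, transpose_transpose,
      transpose_single, Matrix.smul_apply, Matrix.add_apply, mul_apply, single_apply, ite_and,
      mul_ite, mul_one, mul_zero, sum_ite_eq, mem_univ, ↓reduceIte, transpose_apply, ite_mul,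
      zero_mul, one_mul, sum_ite_irrel, sum_const_zero, smul_eq_mul]
    ring
  simp only [hentry, div_pow, ← sum_div, sum_sum_add_mul_swap_sq, mul_apply, transpose_apply]
  ring

end SymmetrizedConj

theorem channel_matrix_mse_lower_bound_general {Ω : Type*} [MeasurableSpace Ω]
    (μ : Measure Ω) [IsProbabilityMeasure μ]
    (N : ℕ)
    (M Θ : Matrix (Fin 3) (Fin 3) ℝ) (hM : Mᵀ * M = 1) (hΘ : Θᵀ * Θ = 1)
    (l₁ l₂ l₃ : ℝ)
    (A X : Matrix (Fin 3) (Fin 3) ℝ)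
    (hA : A = Matrix.diagonal ![l₁, l₂, l₃]) (hX : X = Mᵀ * A * Θ)
    (xhat : Fin 3 → Fin 3 → Ω → ℝ)
    (hL2 : ∀ i j, MemLp (xhat i j) 2 μ)
    (hindep : iIndepFun
      (fun p : Fin 3 × Fin 3 => xhat p.1 p.2) μ)
    (hmean : ∀ i j, (∫ ω, xhat i j ω ∂μ) = X i j)
    (hvar : ∀ i j, variance (xhat i j) μ = (1 - X i j ^ 2) / N)
    (Ahat : Ω → Matrix (Fin 3) (Fin 3) ℝ)
    (hAhat : ∀ ω, Ahat ω = M * Matrix.of (fun i j => xhat i j ω) * Θᵀ) :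
    (1 / N) * (6 - (l₁ ^ 2 + l₂ ^ 2 + l₃ ^ 2))
      ≤ ∫ ω, ∑ i, ∑ j, (((1 / 2 : ℝ) • (Ahat ω + (Ahat ω)ᵀ)) i j - A i j) ^ 2 ∂μ := by
  have hXA : symmetrizedConj M Θ X = A := by
    have hconj : M * X * Θᵀ = A := by
      rw [hX, Matrix.mul_assoc, Matrix.mul_assoc, mul_eq_one_comm.mp hΘ, Matrix.mul_one,
        ← Matrix.mul_assoc, mul_eq_one_comm.mp hM, Matrix.one_mul]
    rw [symmetrizedConj_apply, hconj, hA, diagonal_transpose]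
    module
  have herr : ∀ ω i j, ((1 / 2 : ℝ) • (Ahat ω + (Ahat ω)ᵀ)) i j - A i j
      = symmetrizedConj M Θ (of fun a b => xhat a b ω) i j
        - symmetrizedConj M Θ (of fun a b => μ[xhat a b]) i j := fun ω i j => by
    simp only [hmean, hAhat]
    rw [← hXA]
    rfl
  have hXsq : ∑ i, ∑ j, X i j ^ 2 = l₁ ^ 2 + l₂ ^ 2 + l₃ ^ 2 := by
    rw [hX, sum_sum_sq_transpose_mul_mul hM hΘ, hA]
    simp [Fin.sum_univ_three, diagonal_apply]
  have hC : (Mᵀ * Θ)ᵀ * (Mᵀ * Θ) = 1 := by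
    rw [transpose_mul, transpose_transpose, Matrix.mul_assoc, ← Matrix.mul_assoc M,
      mul_eq_one_comm.mp hM, Matrix.one_mul, hΘ]
  simp only [herr]
  rw [integral_sum_sq_linearMap_sub_eq_sum_variance _ hL2 hindep]
  simp only [sum_sum_sq_symmetrizedConj_single, sum_sq_apply_eq_one_of_transpose_mul_self hM,
    sum_sq_apply_eq_one_of_transpose_mul_self hΘ, hvar]
  calc (1 / N) * (6 - (l₁ ^ 2 + l₂ ^ 2 + l₃ ^ 2))
      = (1 / N) * ((3 * 3 + 3) / 2 - ∑ i, ∑ j, X i j ^ 2) := by rw [hXsq]; norm_num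
    _ ≤ (1 / N) * ∑ i, ∑ j, (1 + (Mᵀ * Θ) i j ^ 2) / 2 * (1 - X i j ^ 2) := by
        gcongr
        simpa using card_mul_add_card_div_two_sub_le hC X
    _ = _ := by simp only [mul_sum]; ring_nf

/-- Theorem 3, lower bound: with `M, Θ` orthogonal,
`A = diag(λ₁,λ₂,λ₃)` (`λᵢ ∈ [-1,1]`), `X = Mᵀ·A·Θ`, independent square-integrable
estimators `x̂_{ij}` with mean `X_{ij}` and variance `(1 - X_{ij}²)/N`,
`Â = M·X̂·Θᵀ` and `Â_s = (Â + Âᵀ)/2`, the mean squared Frobenius error of the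
symmetrized estimator satisfies
`E[‖Â_s - A‖²] ≥ (1/N)(6 - (λ₁² + λ₂² + λ₃²))`. -/
theorem channel_matrix_mse_lower_bound {Ω : Type*} [MeasurableSpace Ω]
    (μ : Measure Ω) [IsProbabilityMeasure μ]
    (N : ℕ) (hN : 0 < N)
    (M Θ : Matrix (Fin 3) (Fin 3) ℝ) (hM : Mᵀ * M = 1) (hΘ : Θᵀ * Θ = 1)
    (l₁ l₂ l₃ : ℝ) (hl₁ : l₁ ∈ Set.Icc (-1 : ℝ) 1) (hl₂ : l₂ ∈ Set.Icc (-1 : ℝ) 1)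
    (hl₃ : l₃ ∈ Set.Icc (-1 : ℝ) 1)
    (A X : Matrix (Fin 3) (Fin 3) ℝ)
    (hA : A = Matrix.diagonal ![l₁, l₂, l₃]) (hX : X = Mᵀ * A * Θ)
    (xhat : Fin 3 → Fin 3 → Ω → ℝ)
    (hmeas : ∀ i j, Measurable (xhat i j))
    (hL2 : ∀ i j, MemLp (xhat i j) 2 μ)
    (hindep : iIndepFun
      (fun p : Fin 3 × Fin 3 => xhat p.1 p.2) μ)
    (hmean : ∀ i j, (∫ ω, xhat i j ω ∂μ) = X i j)
    (hvar : ∀ i j, variance (xhat i j) μ = (1 - X i j ^ 2) / N)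
    (Ahat : Ω → Matrix (Fin 3) (Fin 3) ℝ)
    (hAhat : ∀ ω, Ahat ω = M * Matrix.of (fun i j => xhat i j ω) * Θᵀ) :
    (1 / N) * (6 - (l₁ ^ 2 + l₂ ^ 2 + l₃ ^ 2))
      ≤ ∫ ω, ∑ i, ∑ j, (((1 / 2 : ℝ) • (Ahat ω + (Ahat ω)ᵀ)) i j - A i j) ^ 2 ∂μ :=
  channel_matrix_mse_lower_bound_general μ N M Θ hM hΘ l₁ l₂ l₃ A X hA hX xhat hL2 hindep hmean hvar
    Ahat hAhat
end

section
/- Let A : ℝ³ × ℝ³ → M₃(ℝ) be the Pauli channel parametrization A(λ₁,λ₂,λ₃,φz,φy,φx) = R·diag(λ₁,λ₂,λ₃)·R⁻¹ with R = Rz(φz)Ry(φy)Rx(φx). Then A is differentiable at the point (λ₁,λ₂,λ₃,0,0,0) and its (Fréchet) derivative there sends the tangent vector (u₁,u₂,u₃,w_z,w_y,w_x) ∈ ℝ⁶ to the symmetric matrix D with diagonal entries D₁₁ = u₁, D₂₂ = u₂, D₃₃ = u₃ and off-diagonal entries D₁₂ = D₂₁ = (λ₁−λ₂)·w_z, D₁₃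 = D₃₁ = (λ₁−λ₃)·w_y, D₂₃ = D₃₂ = (λ₂−λ₃)·w_x. (Equivalently, in the bases (dλ₁,dλ₂,dλ₃,dφz,dφy,dφx) and (da₁₁,da₂₂,da₃₃,da₁₂,s, da₁₃,s, da₂₃,s), the derivative is Diag(1,1,1, λ₁−λ₂, λ₁−λ₃, λ₂−λ₃).) -/
open Matrix Real

attribute [local instance] Matrix.normedAddCommGroup Matrix.normedSpace

/-! The Euler rotation `R = Rz φz * Ry φy * Rx φx` is orthogonal, so `A = R Λ Rᵀ` with
`Λ = diag(λ₁, λ₂, λ₃)`. At `φ = 0` we have `R = 1`, and the differential of `R` is the skew matrix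
`Ω` built from `(w_z, w_y, w_x)`. The product rule then gives `dA = diag(u) + Ω Λ - Λ Ω`, whose
off-diagonal entries are `(λⱼ - λᵢ) Ω_ij`. -/

open ContinuousLinearMap

theorem Matrix.hasDerivAt_iff {𝕜 α : Type*} [NontriviallyNormedField 𝕜] [NormedAddCommGroup α]
    [NormedSpace 𝕜 α] {m n : Type*} [Fintype m] [Fintype n] {f : 𝕜 → Matrix m n α}
    {f' : Matrix m n α} {x : 𝕜} :
    HasDerivAt f f' x ↔ ∀ i j, HasDerivAt (fun t => f t i j) (f' i j) x :=
  hasDerivAt_pi.trans (forall_congr' fun _ => hasDerivAt_pi)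

section MatrixProductRule

variable {𝕜 E : Type*} [NontriviallyNormedField 𝕜] [CompleteSpace 𝕜]
  [NormedAddCommGroup E] [NormedSpace 𝕜 E] {l m n : Type*} [Fintype l] [Fintype m] [Fintype n]

theorem Matrix.exists_hasFDerivAt_mul {f : E → Matrix l m 𝕜} {g : E → Matrix m n 𝕜}
    {f' : E →L[𝕜] Matrix l m 𝕜} {g' : E →L[𝕜] Matrix m n 𝕜} {x : E}
    (hf : HasFDerivAt f f' x) (hg : HasFDerivAt g g' x) :
    ∃ L : E →L[𝕜] Matrix l n 𝕜, HasFDerivAt (fun y => f y * g y) L x ∧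
      ∀ v, L v = f' v * g x + f x * g' v :=
  ⟨_, (mulLinearMap 𝕜 : Matrix l m 𝕜 →ₗ[𝕜] _ →ₗ[𝕜] Matrix l n 𝕜).toContinuousBilinearMap
    |>.hasFDerivAt_of_bilinear hf hg, fun _ => add_comm _ _⟩

theorem Matrix.exists_hasFDerivAt_mul_mul_transpose {R D : E → Matrix n n 𝕜}
    {R' D' : E →L[𝕜] Matrix n n 𝕜} {x : E} (hR : HasFDerivAt R R' x) (hD : HasFDerivAt D D' x) :
    ∃ L : E →L[𝕜] Matrix n n 𝕜, HasFDerivAt (fun y => R y * D y * (R y)ᵀ) L x ∧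
      ∀ v, L v = R' v * D x * (R x)ᵀ + R x * D' v * (R x)ᵀ + R x * D x * (R' v)ᵀ := by
  let T := (transposeLinearEquiv n n 𝕜 𝕜).toContinuousLinearEquiv
  obtain ⟨L₁, hL₁, hL₁v⟩ := Matrix.exists_hasFDerivAt_mul hR hD
  obtain ⟨L, hL, hLv⟩ := Matrix.exists_hasFDerivAt_mul hL₁ (T.hasFDerivAt.comp x hR)
  refine ⟨L, hL, fun v => ?_⟩
  rw [hLv, hL₁v, Matrix.add_mul]
  rfl

end MatrixProductRule

theorem hasDerivAt_Rz (φ : ℝ) :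
    HasDerivAt Rz !![-sin φ, -cos φ, 0; cos φ, -sin φ, 0; 0, 0, 0] φ := by
  rw [Matrix.hasDerivAt_iff]
  intro i j
  fin_cases i <;> fin_cases j <;>
    simp [Rz, hasDerivAt_cos, hasDerivAt_sin, (hasDerivAt_sin φ).fun_neg, hasDerivAt_const]

theorem hasDerivAt_Ry (φ : ℝ) :
    HasDerivAt Ry !![-sin φ, 0, -cos φ; 0, 0, 0; cos φ, 0, -sin φ] φ := by
  rw [Matrix.hasDerivAt_iff]
  intro i j
  fin_cases i <;> fin_cases j <;>
    simp [Ry, hasDerivAt_cos, hasDerivAt_sin, (hasDerivAt_sin φ).fun_neg, hasDerivAt_const]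

theorem hasDerivAt_Rx (φ : ℝ) :
    HasDerivAt Rx !![0, 0, 0; 0, -sin φ, -cos φ; 0, cos φ, -sin φ] φ := by
  rw [Matrix.hasDerivAt_iff]
  intro i j
  fin_cases i <;> fin_cases j <;>
    simp [Rx, hasDerivAt_cos, hasDerivAt_sin, (hasDerivAt_sin φ).fun_neg, hasDerivAt_const]

theorem Rz_mem_orthogonalGroup (φ : ℝ) : Rz φ ∈ orthogonalGroup (Fin 3) ℝ := by
  rw [mem_orthogonalGroup_iff]
  ext i j
  fin_cases i <;> fin_cases j <;> simp [Rz, mul_apply, Fin.sum_univ_succ, ← sq, mul_comm]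

theorem Ry_mem_orthogonalGroup (φ : ℝ) : Ry φ ∈ orthogonalGroup (Fin 3) ℝ := by
  rw [mem_orthogonalGroup_iff]
  ext i j
  fin_cases i <;> fin_cases j <;> simp [Ry, mul_apply, Fin.sum_univ_succ, ← sq, mul_comm]

theorem Rx_mem_orthogonalGroup (φ : ℝ) : Rx φ ∈ orthogonalGroup (Fin 3) ℝ := by
  rw [mem_orthogonalGroup_iff]
  ext i j
  fin_cases i <;> fin_cases j <;> simp [Rx, mul_apply, Fin.sum_univ_succ, ← sq, mul_comm]

noncomputable def eulerRotation (ψ : ℝ × ℝ × ℝ) : Matrix (Fin 3) (Fin 3) ℝ :=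
  Rz ψ.1 * Ry ψ.2.1 * Rx ψ.2.2

theorem eulerRotation_mem_orthogonalGroup (ψ : ℝ × ℝ × ℝ) :
    eulerRotation ψ ∈ orthogonalGroup (Fin 3) ℝ :=
  mul_mem (mul_mem (Rz_mem_orthogonalGroup _) (Ry_mem_orthogonalGroup _))
    (Rx_mem_orthogonalGroup _)

theorem eulerRotation_zero : eulerRotation 0 = 1 := by
  ext i j
  fin_cases i <;> fin_cases j <;> simp [eulerRotation, Rz, Ry, Rx, mul_apply, Fin.sum_univ_succ]

theorem pauliA_eq_eulerRotation_conj :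
    pauliA = fun p => eulerRotation p.2.2.2 * diagonal ![p.1, p.2.1, p.2.2.1] *
      (eulerRotation p.2.2.2)ᵀ := by
  ext1 p
  rw [pauliA, ← eulerRotation,
    inv_eq_right_inv ((mem_orthogonalGroup_iff _ _).mp (eulerRotation_mem_orthogonalGroup _))]

/- The derivatives are restated with explicit types: the terms produced by the chain rule carry
the instances of `Matrix.normedAddCommGroup`, which are not reducibly equal to
`Matrix.addCommMonoid`, and `simp` could not evaluate them. -/
theorem exists_hasFDerivAt_eulerRotation_zero :
    ∃ L : ℝ × ℝ × ℝ →L[ℝ] Matrix (Fin 3) (Fin 3) ℝ, HasFDerivAt eulerRotation L 0 ∧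
      ∀ w : ℝ × ℝ × ℝ, L w = !![0, -w.1, -w.2.1; w.1, 0, -w.2.2; w.2.1, w.2.2, 0] := by
  have hz : HasFDerivAt (fun ψ : ℝ × ℝ × ℝ => Rz ψ.1)
      ((fst ℝ ℝ (ℝ × ℝ)).smulRight !![-sin 0, -cos 0, 0; cos 0, -sin 0, 0; 0, 0, 0]) 0 :=
    ((hasDerivAt_Rz 0).hasFDerivAt.comp (f := @Prod.fst ℝ (ℝ × ℝ)) 0 hasFDerivAt_fst :)
  have hy : HasFDerivAt (fun ψ : ℝ × ℝ × ℝ => Ry ψ.2.1)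
      (((fst ℝ ℝ ℝ).comp (snd ℝ ℝ (ℝ × ℝ))).smulRight
        !![-sin 0, 0, -cos 0; 0, 0, 0; cos 0, 0, -sin 0]) 0 :=
    ((hasDerivAt_Ry 0).hasFDerivAt.comp (f := fun ψ : ℝ × ℝ × ℝ => ψ.2.1) 0
      hasFDerivAt_snd.fst :)
  have hx : HasFDerivAt (fun ψ : ℝ × ℝ × ℝ => Rx ψ.2.2)
      (((snd ℝ ℝ ℝ).comp (snd ℝ ℝ (ℝ × ℝ))).smulRight
        !![0, 0, 0; 0, -sin 0, -cos 0; 0, cos 0, -sin 0]) 0 :=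
    ((hasDerivAt_Rx 0).hasFDerivAt.comp (f := fun ψ : ℝ × ℝ × ℝ => ψ.2.2) 0
      hasFDerivAt_snd.snd :)
  obtain ⟨L₁, hL₁, hL₁w⟩ := Matrix.exists_hasFDerivAt_mul hz hy
  obtain ⟨L, hL, hLw⟩ := Matrix.exists_hasFDerivAt_mul hL₁ hx
  refine ⟨L, hL, fun w => ?_⟩
  simp only [hLw, hL₁w, smulRight_apply, ContinuousLinearMap.comp_apply, coe_fst', coe_snd']
  ext i j
  fin_cases i <;> fin_cases j <;> simp [Rz, Ry, Rx]

noncomputable def eigenvalueDiagonalCLM :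
    ℝ × ℝ × ℝ × ℝ × ℝ × ℝ →L[ℝ] Matrix (Fin 3) (Fin 3) ℝ :=
  LinearMap.toContinuousLinearMap
    { toFun := fun p => diagonal ![p.1, p.2.1, p.2.2.1]
      map_add' := fun p q => by rw [diagonal_add]; congr 1; ext i; fin_cases i <;> rfl
      map_smul' := fun c p => by rw [← diagonal_smul]; congr 1; ext i; fin_cases i <;> rfl }

/-- Lemma 4: the parametrization `A` is differentiable at
`(λ₁,λ₂,λ₃,0,0,0)` and its Fréchet derivative sends `(u₁,u₂,u₃,w_z,w_y,w_x)` to the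
symmetric matrix with diagonal `(u₁,u₂,u₃)` and off-diagonal entries
`(λ₁-λ₂)w_z`, `(λ₁-λ₃)w_y`, `(λ₂-λ₃)w_x`. -/
theorem pauliA_hasFDerivAt (l₁ l₂ l₃ : ℝ) :
    ∃ L : ℝ × ℝ × ℝ × ℝ × ℝ × ℝ →L[ℝ] Matrix (Fin 3) (Fin 3) ℝ,
      HasFDerivAt pauliA L (l₁, l₂, l₃, 0, 0, 0) ∧
      ∀ u₁ u₂ u₃ wz wy wx : ℝ,
        L (u₁, u₂, u₃, wz, wy, wx)
          = !![u₁, (l₁ - l₂) * wz, (l₁ - l₃) * wy;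
               (l₁ - l₂) * wz, u₂, (l₂ - l₃) * wx;
               (l₁ - l₃) * wy, (l₂ - l₃) * wx, u₃] := by
  obtain ⟨Ω, hΩ, hΩw⟩ := exists_hasFDerivAt_eulerRotation_zero
  let angles : ℝ × ℝ × ℝ × ℝ × ℝ × ℝ →L[ℝ] ℝ × ℝ × ℝ :=
    (snd ℝ ℝ (ℝ × ℝ × ℝ)).comp ((snd ℝ ℝ (ℝ × ℝ × ℝ × ℝ)).comp (snd ℝ ℝ (ℝ × ℝ × ℝ × ℝ × ℝ)))
  have hΩ₆ : HasFDerivAt (fun p : ℝ × ℝ × ℝ × ℝ × ℝ × ℝ => eulerRotation p.2.2.2)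
      (Ω.comp angles) (l₁, l₂, l₃, 0, 0, 0) :=
    (hΩ.comp (l₁, l₂, l₃, 0, 0, 0) angles.hasFDerivAt :)
  obtain ⟨L, hL, hLv⟩ :=
    Matrix.exists_hasFDerivAt_mul_mul_transpose hΩ₆ eigenvalueDiagonalCLM.hasFDerivAt
  refine ⟨L, pauliA_eq_eulerRotation_conj ▸ hL, fun u₁ u₂ u₃ wz wy wx => ?_⟩
  simp only [hLv, ContinuousLinearMap.comp_apply, coe_snd', hΩw, angles, Prod.mk_zero_zero,
    eulerRotation_zero, Matrix.one_mul, Matrix.mul_one, transpose_one]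
  ext i j
  fin_cases i <;> fin_cases j <;> simp [eigenvalueDiagonalCLM, vecMul_diagonal] <;> ring
end

section
/- Let N be a positive integer, let M and Θ be real orthogonal 3×3 matrices, let λ₁, λ₂, λ₃ ∈ [−1,1], and let A = diag(λ₁, λ₂, λ₃). Set X = Mᵀ·A·Θ. Let (x̂_{ij})_{i,j∈{1,2,3}} be independent real random variables with E[x̂_{ij}] = X_{ij} and Var(x̂_{ij}) = (1 − X_{ij}²)/N, and define the random matrix Â = M·X̂·Θᵀ. Then Σ_{i=1}^{3} E[(Â_{ii} − λᵢ)²] = Var(Â₁₁) + Var(Â₂₂) + Var(Â₃₃) ≥ (1/N)·(3 − (λ₁² + λ₂² + λ₃²)). (Theorem 4, lower bound on the linearized loss for the contraction parameters.) -/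
/-!
Each diagonal entry `Â i i = ∑ j k, M i j * Θ i k * x̂ j k` is a linear combination of the
independent estimators with mean `(M X Θᵀ) i i = λ i`, so its mean squared error is its variance
`∑ j k, (M i j * Θ i k)² (1 - X j k²) / N`. Summed over `i`, the weights
`∑ i, (M i j * Θ i k)²` lie in `[0, 1]` (columns of `M`, entries of `Θ`) and have total mass `3`
(rows of `M` and `Θ`), so the sum is at least `(3 - ∑ X j k²) / N`; finally `∑ X j k² = ∑ λ i²`
because orthogonal conjugation preserves the Frobenius norm.
-/

open MeasureTheory ProbabilityTheory Matrix

namespace Matrix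

variable {l l' m n R : Type*}

theorem mul_mul_apply_eq_sum [Fintype m] [Fintype n] [CommSemiring R] (M : Matrix l m R)
    (B : Matrix m n R) (P : Matrix n l' R) (i : l) (i' : l') :
    (M * B * P) i i' = ∑ p : m × n, M i p.1 * P p.2 i' * B p.1 p.2 := by
  simp only [mul_apply, Finset.sum_mul, Fintype.sum_prod_type]
  rw [Finset.sum_comm]
  exact Finset.sum_congr rfl fun _ _ => Finset.sum_congr rfl fun _ _ => by ring

theorem sum_sq_apply_left_eq_one [Fintype m] [CommSemiring R] [DecidableEq n] {M : Matrix m n R}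
    (hM : Mᵀ * M = 1) (j : n) : ∑ i, M i j ^ 2 = 1 := by
  simpa [mul_apply, sq] using congrFun₂ hM j j

theorem sum_sq_apply_right_eq_one [Fintype n] [CommRing R] [DecidableEq n] {M : Matrix n n R}
    (hM : Mᵀ * M = 1) (i : n) : ∑ j, M i j ^ 2 = 1 :=
  sum_sq_apply_left_eq_one (M := Mᵀ) (by rw [transpose_transpose, mul_eq_one_comm.mp hM]) i

theorem sum_sq_eq_trace_transpose_mul_self [Fintype m] [Fintype n] [CommSemiring R]
    (A : Matrix m n R) :
    ∑ p : m × n, A p.1 p.2 ^ 2 = trace (Aᵀ * A) := by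
  simp only [trace, diag, mul_apply, transpose_apply, Fintype.sum_prod_type, sq]
  exact Finset.sum_comm

theorem sum_sq_transpose_mul_mul_of_orthogonal [Fintype n] [CommRing R] [DecidableEq n]
    {M Θ : Matrix n n R} (hM : Mᵀ * M = 1) (hΘ : Θᵀ * Θ = 1) (A : Matrix n n R) :
    ∑ p : n × n, (Mᵀ * A * Θ) p.1 p.2 ^ 2 = ∑ p : n × n, A p.1 p.2 ^ 2 := by
  have hMM : M * Mᵀ = 1 := mul_eq_one_comm.mp hM
  have hΘΘ : Θ * Θᵀ = 1 := mul_eq_one_comm.mp hΘ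
  rw [sum_sq_eq_trace_transpose_mul_self, sum_sq_eq_trace_transpose_mul_self]
  calc trace ((Mᵀ * A * Θ)ᵀ * (Mᵀ * A * Θ)) = trace (Θᵀ * (Aᵀ * (M * Mᵀ) * A * Θ)) := by
        simp only [transpose_mul, transpose_transpose, Matrix.mul_assoc]
    _ = trace (Aᵀ * (M * Mᵀ) * A * (Θ * Θᵀ)) := by rw [trace_mul_comm, Matrix.mul_assoc]
    _ = trace (Aᵀ * A) := by rw [hMM, hΘΘ, Matrix.mul_one, Matrix.mul_one]

theorem sum_sq_diagonal [Fintype n] [CommSemiring R] [DecidableEq n] (d : n → R) :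
    ∑ p : n × n, diagonal d p.1 p.2 ^ 2 = ∑ i, d i ^ 2 := by
  simp [Fintype.sum_prod_type, diagonal_apply]

section Orthogonal

variable [Fintype n] [DecidableEq n] {M Θ : Matrix n n ℝ}

theorem sum_sq_mul_apply_le_one (hM : Mᵀ * M = 1) (hΘ : Θᵀ * Θ = 1) (j k : n) :
    ∑ i, (M i j * Θ i k) ^ 2 ≤ 1 := by
  have hΘ_le (i : n) : Θ i k ^ 2 ≤ 1 := by
    rw [← sum_sq_apply_left_eq_one hΘ k]
    exact Finset.single_le_sum (fun i' _ => sq_nonneg (Θ i' k)) (Finset.mem_univ i)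
  calc ∑ i, (M i j * Θ i k) ^ 2 ≤ ∑ i, M i j ^ 2 :=
        Finset.sum_le_sum fun i _ => by
          rw [mul_pow]; exact mul_le_of_le_one_right (sq_nonneg _) (hΘ_le i)
    _ = 1 := sum_sq_apply_left_eq_one hM j

theorem sum_sum_sq_mul_apply_eq_card (hM : Mᵀ * M = 1) (hΘ : Θᵀ * Θ = 1) :
    ∑ i, ∑ p : n × n, (M i p.1 * Θ i p.2) ^ 2 = Fintype.card n := by
  simp only [mul_pow, Fintype.sum_prod_type, ← Finset.mul_sum, sum_sq_apply_right_eq_one hΘ,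
    mul_one, sum_sq_apply_right_eq_one hM]
  simp

theorem card_sub_sum_sq_le_sum_sum_sq_mul_apply_mul (hM : Mᵀ * M = 1) (hΘ : Θᵀ * Θ = 1)
    (X : Matrix n n ℝ) :
    Fintype.card n - ∑ p : n × n, X p.1 p.2 ^ 2
      ≤ ∑ i, ∑ p : n × n, (M i p.1 * Θ i p.2) ^ 2 * (1 - X p.1 p.2 ^ 2) := by
  set w : n × n → ℝ := fun p => ∑ i, (M i p.1 * Θ i p.2) ^ 2
  have hw_sum : ∑ p, w p = Fintype.card n := by
    rw [Finset.sum_comm]; exact sum_sum_sq_mul_apply_eq_card hM hΘ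
  have hw_le (p : n × n) : w p * X p.1 p.2 ^ 2 ≤ X p.1 p.2 ^ 2 :=
    mul_le_of_le_one_left (sq_nonneg _) (sum_sq_mul_apply_le_one hM hΘ p.1 p.2)
  calc Fintype.card n - ∑ p : n × n, X p.1 p.2 ^ 2
      ≤ ∑ p, w p - ∑ p : n × n, w p * X p.1 p.2 ^ 2 := by
        rw [hw_sum]; gcongr with p; exact hw_le p
    _ = ∑ i, ∑ p : n × n, (M i p.1 * Θ i p.2) ^ 2 * (1 - X p.1 p.2 ^ 2) := by
        simp only [w, ← Finset.sum_sub_distrib, Finset.sum_mul]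
        rw [Finset.sum_comm]
        exact Finset.sum_congr rfl fun _ _ => Finset.sum_congr rfl fun _ _ => by ring

end Orthogonal

end Matrix

section RandomMatrix

variable {Ω ι l l' m n : Type*} [MeasurableSpace Ω] {μ : Measure Ω}

theorem integral_sub_sq_eq_variance {Y : Ω → ℝ} {c : ℝ} (hY : AEMeasurable Y μ)
    (hc : ∫ ω, Y ω ∂μ = c) : ∫ ω, (Y ω - c) ^ 2 ∂μ = variance Y μ := by
  rw [variance_eq_integral hY, hc]

theorem variance_sum_const_mul [IsProbabilityMeasure μ] {Y : ι → Ω → ℝ} (hY : iIndepFun Y μ)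
    (hL2 : ∀ i, MemLp (Y i) 2 μ) (s : Finset ι) (c : ι → ℝ) :
    variance (fun ω => ∑ i ∈ s, c i * Y i ω) μ = ∑ i ∈ s, c i ^ 2 * variance (Y i) μ := by
  have hpair : Set.Pairwise (s : Set ι) fun i j =>
      IndepFun (fun ω => c i * Y i ω) (fun ω => c j * Y j ω) μ := fun i _ j _ hij =>
    (hY.indepFun hij).comp (measurable_const_mul (c i)) (measurable_const_mul (c j))
  rw [← Finset.sum_fn, IndepFun.variance_sum (fun i _ => (hL2 i).const_mul (c i)) hpair]
  simp only [variance_const_mul]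

theorem integral_sum_sub_sq_eq_sum_variance [IsFiniteMeasure μ] {Y : ι → Ω → ℝ} {c : ι → ℝ}
    (hY : ∀ i, MemLp (Y i) 2 μ) (hc : ∀ i, ∫ ω, Y i ω ∂μ = c i) (s : Finset ι) :
    ∫ ω, ∑ i ∈ s, (Y i ω - c i) ^ 2 ∂μ = ∑ i ∈ s, variance (Y i) μ := by
  rw [integral_finsetSum (f := fun i ω => (Y i ω - c i) ^ 2) s
    fun i _ => ((hY i).sub (memLp_const (c i))).integrable_sq]
  exact Finset.sum_congr rfl fun i _ => integral_sub_sq_eq_variance (hY i).aemeasurable (hc i)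

variable [Fintype m] [Fintype n] (M : Matrix l m ℝ) (P : Matrix n l' ℝ) {x : m → n → Ω → ℝ}

theorem memLp_mul_of_mul_apply (hx : ∀ j k, MemLp (x j k) 2 μ) (i : l) (i' : l') :
    MemLp (fun ω => (M * of (fun j k => x j k ω) * P) i i') 2 μ := by
  simp only [mul_mul_apply_eq_sum, of_apply]
  exact memLp_finsetSum _ fun (p : m × n) _ => (hx p.1 p.2).const_mul _

theorem integral_mul_of_mul_apply (hx : ∀ j k, Integrable (x j k) μ) (i : l) (i' : l') :
    ∫ ω, (M * of (fun j k => x j k ω) * P) i i' ∂μ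
      = (M * of (fun j k => ∫ ω, x j k ω ∂μ) * P) i i' := by
  simp only [mul_mul_apply_eq_sum, of_apply]
  rw [integral_finsetSum _ fun p _ => (hx p.1 p.2).const_mul _]
  simp only [integral_const_mul]

theorem variance_mul_of_mul_apply [IsProbabilityMeasure μ]
    (hindep : iIndepFun (fun p : m × n => x p.1 p.2) μ) (hx : ∀ j k, MemLp (x j k) 2 μ)
    (i : l) (i' : l') :
    variance (fun ω => (M * of (fun j k => x j k ω) * P) i i') μ
      = ∑ p : m × n, (M i p.1 * P p.2 i') ^ 2 * variance (x p.1 p.2) μ := by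
  simp only [mul_mul_apply_eq_sum, of_apply]
  exact variance_sum_const_mul hindep (fun p => hx p.1 p.2) _ _

end RandomMatrix

theorem contraction_params_mse_lower_bound_general {Ω : Type*} [MeasurableSpace Ω]
    (μ : Measure Ω) [IsProbabilityMeasure μ]
    (N : ℕ)
    (M Θ : Matrix (Fin 3) (Fin 3) ℝ) (hM : Mᵀ * M = 1) (hΘ : Θᵀ * Θ = 1)
    (l₁ l₂ l₃ : ℝ)
    (A X : Matrix (Fin 3) (Fin 3) ℝ)
    (hA : A = Matrix.diagonal ![l₁, l₂, l₃]) (hX : X = Mᵀ * A * Θ)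
    (xhat : Fin 3 → Fin 3 → Ω → ℝ)
    (hL2 : ∀ i j, MemLp (xhat i j) 2 μ)
    (hindep : iIndepFun
      (fun p : Fin 3 × Fin 3 => xhat p.1 p.2) μ)
    (hmean : ∀ i j, (∫ ω, xhat i j ω ∂μ) = X i j)
    (hvar : ∀ i j, variance (xhat i j) μ = (1 - X i j ^ 2) / N)
    (Ahat : Ω → Matrix (Fin 3) (Fin 3) ℝ)
    (hAhat : ∀ ω, Ahat ω = M * Matrix.of (fun i j => xhat i j ω) * Θᵀ) :
    (∫ ω, ((Ahat ω 0 0 - l₁) ^ 2 + (Ahat ω 1 1 - l₂) ^ 2 + (Ahat ω 2 2 - l₃) ^ 2) ∂μ)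
        = variance (fun ω => Ahat ω 0 0) μ + variance (fun ω => Ahat ω 1 1) μ
          + variance (fun ω => Ahat ω 2 2) μ
      ∧ (1 / N) * (3 - (l₁ ^ 2 + l₂ ^ 2 + l₃ ^ 2))
          ≤ variance (fun ω => Ahat ω 0 0) μ + variance (fun ω => Ahat ω 1 1) μ
            + variance (fun ω => Ahat ω 2 2) μ := by
  set l : Fin 3 → ℝ := ![l₁, l₂, l₃]
  have hentry (i : Fin 3) :
      (fun ω => Ahat ω i i) = fun ω => (M * of (fun j k => xhat j k ω) * Θᵀ) i i :=
    funext fun ω => by rw [hAhat]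
  have hMXΘ : M * X * Θᵀ = A := by
    rw [hX, ← Matrix.mul_assoc, ← Matrix.mul_assoc, mul_eq_one_comm.mp hM, Matrix.one_mul,
      Matrix.mul_assoc, mul_eq_one_comm.mp hΘ, Matrix.mul_one]
  have hmean_diag (i : Fin 3) : ∫ ω, Ahat ω i i ∂μ = l i := by
    rw [hentry, integral_mul_of_mul_apply _ _ (fun j k => (hL2 j k).integrable one_le_two),
      show of (fun j k => ∫ ω, xhat j k ω ∂μ) = X from ext hmean, hMXΘ, hA, diagonal_apply_eq]
  refine ⟨?_, ?_⟩
  · simpa [l, Fin.sum_univ_three] using integral_sum_sub_sq_eq_sum_variance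
      (fun i => hentry i ▸ memLp_mul_of_mul_apply _ _ hL2 i i) hmean_diag Finset.univ
  · calc 1 / N * (3 - (l₁ ^ 2 + l₂ ^ 2 + l₃ ^ 2))
        = 1 / N * (Fintype.card (Fin 3) - ∑ p : Fin 3 × Fin 3, X p.1 p.2 ^ 2) := by
          rw [hX, sum_sq_transpose_mul_mul_of_orthogonal hM hΘ, hA, sum_sq_diagonal]
          simp [l, Fin.sum_univ_three, add_assoc]
      _ ≤ 1 / N * ∑ i, ∑ p : Fin 3 × Fin 3, (M i p.1 * Θ i p.2) ^ 2 * (1 - X p.1 p.2 ^ 2) := by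
          gcongr; exact card_sub_sum_sq_le_sum_sum_sq_mul_apply_mul hM hΘ X
      _ = ∑ i, variance (fun ω => Ahat ω i i) μ := by
          simp only [hentry, variance_mul_of_mul_apply _ _ hindep hL2, hvar, transpose_apply,
            Finset.mul_sum]
          exact Finset.sum_congr rfl fun _ _ => Finset.sum_congr rfl fun _ _ => by ring
      _ = _ := Fin.sum_univ_three _

/-- Theorem 4, lower bound: with `M, Θ` orthogonal,
`A = diag(λ₁,λ₂,λ₃)` (`λᵢ ∈ [-1,1]`), `X = Mᵀ·A·Θ`, independent square-integrable
estimators `x̂_{ij}` with mean `X_{ij}` and variance `(1 - X_{ij}²)/N`, and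
`Â = M·X̂·Θᵀ`, the linearized contraction-parameter loss satisfies
`Σᵢ E[(Â_{ii} - λᵢ)²] = Σᵢ Var(Â_{ii}) ≥ (1/N)(3 - (λ₁² + λ₂² + λ₃²))`. -/
theorem contraction_params_mse_lower_bound {Ω : Type*} [MeasurableSpace Ω]
    (μ : Measure Ω) [IsProbabilityMeasure μ]
    (N : ℕ) (hN : 0 < N)
    (M Θ : Matrix (Fin 3) (Fin 3) ℝ) (hM : Mᵀ * M = 1) (hΘ : Θᵀ * Θ = 1)
    (l₁ l₂ l₃ : ℝ) (hl₁ : l₁ ∈ Set.Icc (-1 : ℝ) 1) (hl₂ : l₂ ∈ Set.Icc (-1 : ℝ) 1)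
    (hl₃ : l₃ ∈ Set.Icc (-1 : ℝ) 1)
    (A X : Matrix (Fin 3) (Fin 3) ℝ)
    (hA : A = Matrix.diagonal ![l₁, l₂, l₃]) (hX : X = Mᵀ * A * Θ)
    (xhat : Fin 3 → Fin 3 → Ω → ℝ)
    (hmeas : ∀ i j, Measurable (xhat i j))
    (hL2 : ∀ i j, MemLp (xhat i j) 2 μ)
    (hindep : iIndepFun
      (fun p : Fin 3 × Fin 3 => xhat p.1 p.2) μ)
    (hmean : ∀ i j, (∫ ω, xhat i j ω ∂μ) = X i j)
    (hvar : ∀ i j, variance (xhat i j) μ = (1 - X i j ^ 2) / N)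
    (Ahat : Ω → Matrix (Fin 3) (Fin 3) ℝ)
    (hAhat : ∀ ω, Ahat ω = M * Matrix.of (fun i j => xhat i j ω) * Θᵀ) :
    (∫ ω, ((Ahat ω 0 0 - l₁) ^ 2 + (Ahat ω 1 1 - l₂) ^ 2 + (Ahat ω 2 2 - l₃) ^ 2) ∂μ)
        = variance (fun ω => Ahat ω 0 0) μ + variance (fun ω => Ahat ω 1 1) μ
          + variance (fun ω => Ahat ω 2 2) μ
      ∧ (1 / N) * (3 - (l₁ ^ 2 + l₂ ^ 2 + l₃ ^ 2))
          ≤ variance (fun ω => Ahat ω 0 0) μ + variance (fun ω => Ahat ω 1 1) μ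
            + variance (fun ω => Ahat ω 2 2) μ :=
  contraction_params_mse_lower_bound_general μ N M Θ hM hΘ l₁ l₂ l₃ A X hA hX xhat hL2 hindep hmean
    hvar Ahat hAhat
end
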